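/- arXiv:2002.11593 — 2 statements merged into one kernel-verified Lean document; each statement's English description precedes it below -/
import Mathlib

section
/- Let Step : List β → α → List β be an append-only step function, i.e., for every S : List β and a : α, either Step S a = S or there exists r : β with Step S a = S ++ [r]. Then for every list L : List α and all natural numbers n and m, the states List.foldl Step [] (L.take n) and List.foldl Step [] (L.take m) are comparable under the prefix relation: one is a prefix of the other. -/
theorem foldl_prefix_aux {α β : Type*} (Step : List β → α → List β)
    (hStep : ∀ (S : List β) (a : α), Step S a = S ∨ ∃ r : β, Step S a = S ++ [r]) :
    ∀ (l : List α) (S : List β), S <+: List.foldl Step S l := by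
  intro l
  induction l with
  | nil => intro S; simp
  | cons a l ih =>
    intro S
    have h1 : S <+: Step S a := by
      rcases hStep S a with h | ⟨r, h⟩ <;> rw [h] <;> simp
    exact h1.trans (ih (Step S a))

theorem appendOnly_states_prefix_comparable {α β : Type*}
    (Step : List β → α → List β)
    (hStep : ∀ (S : List β) (a : α), Step S a = S ∨ ∃ r : β, Step S a = S ++ [r])
    (L : List α) (n m : ℕ) :
    List.foldl Step [] (L.take n) <+: List.foldl Step [] (L.take m) ∨
      List.foldl Step [] (L.take m) <+: List.foldl Step [] (L.take n) := by
  have key : ∀ p q : ℕ, p ≤ q →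
      List.foldl Step [] (L.take p) <+: List.foldl Step [] (L.take q) := by
    intro p q hpq
    have : L.take q = L.take p ++ (L.drop p).take (q - p) := by
      rw [← List.take_add, Nat.add_sub_cancel' hpq]
    rw [this, List.foldl_append]
    exact foldl_prefix_aux Step hStep _ _
  rcases le_total n m with h | h
  · exact Or.inl (key n m h)
  · exact Or.inr (key m n h)
end

section
/- Let I be a type of processes, B : Finset I the set of faulty processes with B.card ≤ f, and g : I → List α a function assigning to each process the record sequence it responds with. Suppose the sequences of correct processes are pairwise prefix-comparable: for all i, j ∉ B, g i <+: g j or g j <+: g i. Let Q and Q' be finite sets of processes with Q.card ≥ f + 1 and Q'.card ≥ f + 1, such that g i = S for all i ∈ Q and g i = S' for all i ∈ Q'. Then S <+: S' or S' <+: S. -/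
theorem returned_sequences_prefix_comparable {I : Type*} [DecidableEq I] {α : Type*}
    (f : ℕ) (B : Finset I) (hB : B.card ≤ f)
    (g : I → List α)
    (hcomp : ∀ i j : I, i ∉ B → j ∉ B → g i <+: g j ∨ g j <+: g i)
    (Q Q' : Finset I) (hQ : Q.card ≥ f + 1) (hQ' : Q'.card ≥ f + 1)
    (S S' : List α) (hS : ∀ i ∈ Q, g i = S) (hS' : ∀ i ∈ Q', g i = S') :
    S <+: S' ∨ S' <+: S := by
  have h1 : (Q \ B).Nonempty := by
    rw [← Finset.card_pos]
    have := Finset.le_card_sdiff B Q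
    omega
  have h2 : (Q' \ B).Nonempty := by
    rw [← Finset.card_pos]
    have := Finset.le_card_sdiff B Q'
    omega
  obtain ⟨i, hi⟩ := h1
  obtain ⟨j, hj⟩ := h2
  rw [Finset.mem_sdiff] at hi hj
  have := hcomp i j hi.2 hj.2
  rw [hS i hi.1, hS' j hj.1] at this
  exact this
end
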